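/- For all subsets S, T ⊆ [n], the counts #{σ ∈ S_n : Rmil(σ)=S, Lmil(σ)=T}, #{σ ∈ S_n : Lmap(σ)=S, Lmip(σ)=T}, and #{σ ∈ S_n : Cyc(σ)=S, Lmic1(σ)=T} are all equal, and each of these pairs of set-valued statistics is symmetric, e.g. #{σ : Rmil(σ)=S, Lmil(σ)=T} = #{σ : Rmil(σ)=T, Lmil(σ)=S}, and similarly for (Lmap, Lmip) and (Cyc, Lmic1). -/

import Mathlib

open scoped Classical

namespace SortIdx

variable {n : ℕ}

noncomputable section

/-- The inversion number `inv σ := #{(i,j) : i < j ∧ σ i > σ j}`. -/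
def inv (σ : Equiv.Perm (Fin n)) : ℕ :=
  (Finset.univ.filter (fun p : Fin n × Fin n => p.1 < p.2 ∧ σ p.2 < σ p.1)).card

/-- The inversion set `Inv σ := {(i,j) : i < j ∧ σ i > σ j}`. -/
def InvSet (σ : Equiv.Perm (Fin n)) : Finset (Fin n × Fin n) :=
  Finset.univ.filter (fun p : Fin n × Fin n => p.1 < p.2 ∧ σ p.2 < σ p.1)

/-- Right-to-left minimum letters. -/
def RmilSet (σ : Equiv.Perm (Fin n)) : Finset (Fin n) :=
  (Finset.univ.filter (fun i => ∀ j, i < j → σ i < σ j)).image σ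

/-- The number of right-to-left minima. -/
def rmin (σ : Equiv.Perm (Fin n)) : ℕ := (RmilSet σ).card

/-- Right-to-left minimum places. -/
def RmipSet (σ : Equiv.Perm (Fin n)) : Finset (Fin n) :=
  Finset.univ.filter (fun i => ∀ j, i < j → σ i < σ j)

/-- Right-to-left maximum letters. -/
def RmalSet (σ : Equiv.Perm (Fin n)) : Finset (Fin n) :=
  (Finset.univ.filter (fun i => ∀ j, i < j → σ j < σ i)).image σ

/-- The number of right-to-left maxima. -/
def rmax (σ : Equiv.Perm (Fin n)) : ℕ := (RmalSet σ).card

/-- Left-to-right minimum letters. -/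
def LmilSet (σ : Equiv.Perm (Fin n)) : Finset (Fin n) :=
  (Finset.univ.filter (fun i => ∀ j, j < i → σ i < σ j)).image σ

/-- The number of left-to-right minima. -/
def lmin (σ : Equiv.Perm (Fin n)) : ℕ := (LmilSet σ).card

/-- Left-to-right minimum places. -/
def LmipSet (σ : Equiv.Perm (Fin n)) : Finset (Fin n) :=
  Finset.univ.filter (fun i => ∀ j, j < i → σ i < σ j)

/-- Left-to-right maximum letters. -/
def LmalSet (σ : Equiv.Perm (Fin n)) : Finset (Fin n) :=
  (Finset.univ.filter (fun i => ∀ j, j < i → σ j < σ i)).image σ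

/-- The number of left-to-right maxima. -/
def lmax (σ : Equiv.Perm (Fin n)) : ℕ := (LmalSet σ).card

/-- Left-to-right maximum places. -/
def LmapSet (σ : Equiv.Perm (Fin n)) : Finset (Fin n) :=
  Finset.univ.filter (fun i => ∀ j, j < i → σ j < σ i)

/-- `Cyc σ`: the set of smallest elements of the cycles of `σ`
(`i` is smallest in its cycle iff `i ≤ σ^k i` for all `k`). -/
def CycSet (σ : Equiv.Perm (Fin n)) : Finset (Fin n) :=
  Finset.univ.filter (fun i => ∀ k : ℕ, i ≤ (σ ^ k) i)

/-- The number of cycles of `σ` (fixed points included). -/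
def cyc (σ : Equiv.Perm (Fin n)) : ℕ := (CycSet σ).card

/-- One step of the sorting process computing the sorting index: repeatedly
put the largest not-yet-fixed letter `j` in its place by the transposition
`(i j)` where `i = σ⁻¹ j` is the place of the letter `j`, recording the
distance `j - i`.  This produces the unique factorization
`σ = (i₁ j₁)(i₂ j₂)⋯(i_k j_k)` with `j₁ < ⋯ < j_k`, `i_r < j_r`, and sums
the `j_r - i_r`.  The fuel `n` is always sufficient. -/
def sorAux : ℕ → Equiv.Perm (Fin n) → ℕ
  | 0, _ => 0
  | (fuel + 1), σ =>
    if h : σ.support.Nonempty then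
      (((σ.support.max' h : Fin n) : ℕ) - ((σ⁻¹ (σ.support.max' h) : Fin n) : ℕ)) +
        sorAux fuel (σ * Equiv.swap (σ⁻¹ (σ.support.max' h)) (σ.support.max' h))
    else 0

/-- The sorting index of Petersen. -/
def sor (σ : Equiv.Perm (Fin n)) : ℕ := sorAux n σ

theorem bcode_exists (σ : Equiv.Perm (Fin n)) (i : Fin n) :
    ∃ k : ℕ, 0 < k ∧ (σ⁻¹ ^ k) i ≤ i := by
  refine ⟨orderOf σ⁻¹, orderOf_pos σ⁻¹, ?_⟩
  rw [pow_orderOf_eq_one]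
  simp

/-- The `B`-code of `σ`: `Bcode σ i = σ^(-k) i` where `k ≥ 1` is minimal with
`σ^(-k) i ≤ i`. -/
def Bcode (σ : Equiv.Perm (Fin n)) (i : Fin n) : Fin n :=
  (σ⁻¹ ^ (Nat.find (bcode_exists σ i))) i

/-- The `B`-code as a sequence in `L_n` (1-indexed values: the entry at place
`i` is the 1-indexed name of the letter `Bcode σ i`). -/
def BcodeNat (σ : Equiv.Perm (Fin n)) : Fin n → ℕ :=
  fun i => ((Bcode σ i : Fin n) : ℕ) + 1

/-- The Lehmer code: `Leh σ i = #{j : j ≤ i ∧ σ j ≤ σ i}` (1-indexed values). -/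
def Leh (σ : Equiv.Perm (Fin n)) : Fin n → ℕ :=
  fun i => (Finset.univ.filter (fun j => j ≤ i ∧ σ j ≤ σ i)).card

/-- The `A`-code: `A σ := Leh σ⁻¹`. -/
def Acode (σ : Equiv.Perm (Fin n)) : Fin n → ℕ := Leh σ⁻¹

/-- `O(code) := {i : code i = 1}` (for `1`-indexed codes in `L_n`). -/
def Oset (code : Fin n → ℕ) : Finset (Fin n) :=
  Finset.univ.filter (fun i => code i = 1)

/-- `Lmic1 σ := O(B σ)`, the set of places where the `B`-code equals `1`,
equivalently the left-to-right minima of the shifted cycle containing `1`. -/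
def Lmic1Set (σ : Equiv.Perm (Fin n)) : Finset (Fin n) :=
  Oset (BcodeNat σ)

/-- `lmic1 σ := #{i : (B σ)_i = 1}`. -/
def lmic1 (σ : Equiv.Perm (Fin n)) : ℕ := (Lmic1Set σ).card

/-- The bijection `φ = B⁻¹ ∘ A` of Foata–Han. -/
def phi (σ : Equiv.Perm (Fin n)) : Equiv.Perm (Fin n) :=
  Function.invFun BcodeNat (Acode σ)

/-- The algorithm computing the induced set of a code: the list argument is
the list of places still to process (from the last to the first), `S` is the
set of letters still available.  At place `i` we pick the `(code i)`-th
smallest element `l` of `S` (1-indexed), put the pairs `(l, j)` for `j ∈ S`,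
`j > l` into the answer and remove `l` from `S`. -/
def inducedAux : List (Fin n) → Finset (Fin n) → (Fin n → ℕ) → Finset (Fin n × Fin n)
  | [], _, _ => ∅
  | (i :: is), S, code =>
      ((S.filter (fun j => (S.sort (· ≤ ·)).getD (code i - 1) i < j)).image
          (fun j => ((S.sort (· ≤ ·)).getD (code i - 1) i, j))) ∪
        inducedAux is (S.erase ((S.sort (· ≤ ·)).getD (code i - 1) i)) code

/-- The induced set `⟨code⟩` of a code in `L_n`. -/
def induced (code : Fin n → ℕ) : Finset (Fin n × Fin n) :=
  inducedAux (List.finRange n).reverse Finset.univ code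

/-- The sorting set `Sor σ := ⟨B σ⟩`. -/
def SorSet (σ : Equiv.Perm (Fin n)) : Finset (Fin n × Fin n) :=
  induced (BcodeNat σ)

/-- The descent set (as a set of places `i`, `0`-indexed, such that
`σ i > σ (i+1)`). -/
def DesSet (σ : Equiv.Perm (Fin n)) : Finset (Fin n) :=
  Finset.univ.filter (fun i => ∃ h : (i : ℕ) + 1 < n, σ ⟨(i : ℕ) + 1, h⟩ < σ i)

/-- The major index (descents being counted `1`-indexed). -/
def maj (σ : Equiv.Perm (Fin n)) : ℕ :=
  ∑ i ∈ DesSet σ, ((i : ℕ) + 1)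

/-- The charge `chg σ := ∑_{i ∈ Des σ⁻¹} (n - i)` (descents `1`-indexed). -/
def chg (σ : Equiv.Perm (Fin n)) : ℕ :=
  ∑ i ∈ DesSet σ⁻¹, (n - ((i : ℕ) + 1))

/-- The reverse-complement of `σ` : `τ i = n + 1 - σ (n + 1 - i)` (1-indexed). -/
def revcomp (σ : Equiv.Perm (Fin n)) : Equiv.Perm (Fin n) :=
  Fin.revPerm * σ * Fin.revPerm

/-- The reverse major index `rmaj σ := maj (revcomp σ)`. -/
def rmaj (σ : Equiv.Perm (Fin n)) : ℕ := maj (revcomp σ)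

end

end SortIdx

/-! Inversion turns `(Rmil, Lmil)` into `(Lmap, Lmip)`. The Lehmer code and the `B`-code are
injections of `Sₙ` into the `n!` codes `f` with `f i ∈ {0, …, i}`; the first carries
`(Lmap, Lmip)`, the second `(Cyc, Lmic₁)`, to the pair of sets `({i | f i = i}, {i | f i = 0})`.
Exchanging the values `0` and `i` at every place `i` is an involution of the codes that swaps
these two sets. The `B`-code is injective because cutting the largest letter `w` out of its
cycle, `σ ↦ σ * swap (σ⁻¹ w) w`, leaves the `B`-code below `w` unchanged. -/

open Finset Equiv

theorem Equiv.swap_mul_apply_of_ne {α : Type*} [DecidableEq α] {ρ : Perm α} {w x : α}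
    (hx : x ≠ w) :
    (swap (ρ w) w * ρ) x = if ρ x = w then ρ w else ρ x := by
  split_ifs with hxw
  · simp [hxw]
  · exact swap_apply_of_ne_of_ne (ρ.injective.ne hx) hxw

inductive FirstHit {α : Type*} (f : α → α) (P : α → Prop) : α → α → Prop
  | here {x : α} : P x → FirstHit f P x x
  | step {x y : α} : ¬ P x → FirstHit f P (f x) y → FirstHit f P x y

namespace FirstHit

variable {α : Type*} {f : α → α} {P : α → Prop}

theorem unique {x y z : α} (hy : FirstHit f P x y) (hz : FirstHit f P x z) : y = z := by
  induction hy with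
  | here hx => cases hz with
    | here => rfl
    | step hx' => exact absurd hx hx'
  | step hx _ ih => cases hz with
    | here hx' => exact absurd hx' hx
    | step _ hz => exact ih hz

theorem of_iterate {x : α} {k : ℕ} (hk : P (f^[k] x)) (hmin : ∀ j < k, ¬ P (f^[j] x)) :
    FirstHit f P x (f^[k] x) := by
  induction k generalizing x with
  | zero => exact here hk
  | succ k ih =>
    exact step (hmin 0 k.succ_pos) (ih hk fun j hj => hmin (j + 1) (by omega))

variable [DecidableEq α]

/-- `swap (ρ w) w * ρ` is `ρ` with `w` cut out of its cycle. -/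
theorem swap_mul {ρ : Perm α} {w x y : α} (h : FirstHit ρ P x y) (hw : ¬ P w) :
    FirstHit (swap (ρ w) w * ρ) P (if x = w then ρ w else x) y := by
  induction h with
  | @here x hx => rw [if_neg fun hxw : x = w => hw (hxw ▸ hx)]; exact here hx
  | @step x y hx _ ih =>
    by_cases hxw : x = w
    · subst hxw
      simpa using ih
    · rw [if_neg hxw]
      exact step hx (by rwa [swap_mul_apply_of_ne hxw])

end FirstHit

namespace Equiv.Perm

variable {α : Type*} [Finite α] [Preorder α]

theorem forall_le_pow_apply_iff (σ : Perm α) (a : α) :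
    (∀ k : ℕ, a ≤ (σ ^ k) a) ↔ ∀ b, σ.SameCycle a b → a ≤ b :=
  ⟨fun h b hb => by obtain ⟨k, rfl⟩ := hb.exists_nat_pow_eq; exact h k,
    fun h k => h _ (sameCycle_pow_right.2 (SameCycle.refl σ a))⟩

theorem forall_le_inv_pow_apply_iff (σ : Perm α) (a : α) :
    (∀ k : ℕ, a ≤ (σ⁻¹ ^ k) a) ↔ ∀ k : ℕ, a ≤ (σ ^ k) a := by
  simp only [forall_le_pow_apply_iff, sameCycle_inv]

end Equiv.Perm

namespace SortIdx

variable {n : ℕ}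

theorem bcode_le (σ : Perm (Fin n)) (i : Fin n) : Bcode σ i ≤ i :=
  (Nat.find_spec (bcode_exists σ i)).2

theorem firstHit_bcode (σ : Perm (Fin n)) (i : Fin n) :
    FirstHit (⇑σ⁻¹) (· ≤ i) (σ⁻¹ i) (Bcode σ i) := by
  obtain ⟨k, hk⟩ := Nat.exists_eq_add_one.2 (Nat.find_spec (bcode_exists σ i)).1
  have hiter : ∀ j, (σ⁻¹ ^ (j + 1)) i = (⇑σ⁻¹)^[j] (σ⁻¹ i) := fun j => by
    rw [Perm.coe_pow, Function.iterate_succ_apply]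
  have hmin : ∀ j < k, ¬ (⇑σ⁻¹)^[j] (σ⁻¹ i) ≤ i := fun j hj hle =>
    Nat.find_min (bcode_exists σ i) (by omega : j + 1 < _) ⟨j.succ_pos, by rwa [hiter]⟩
  have hB : Bcode σ i = (⇑σ⁻¹)^[k] (σ⁻¹ i) := by rw [Bcode, hk, hiter]
  rw [hB]
  exact FirstHit.of_iterate (hB ▸ bcode_le σ i) hmin

theorem bcode_eq_of_firstHit {σ : Perm (Fin n)} {i y : Fin n}
    (h : FirstHit (⇑σ⁻¹) (· ≤ i) (σ⁻¹ i) y) : Bcode σ i = y :=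
  (firstHit_bcode σ i).unique h

theorem inv_apply_le_of_forall_lt_apply_eq {σ : Perm (Fin n)} {w : Fin n}
    (h : ∀ j, w < j → σ j = j) : σ⁻¹ w ≤ w := by
  by_contra! hlt
  have := h _ hlt
  simp only [Perm.coe_inv, apply_symm_apply] at this
  exact hlt.ne this

theorem bcode_eq_inv_apply {σ : Perm (Fin n)} {w : Fin n} (h : ∀ j, w < j → σ j = j) :
    Bcode σ w = σ⁻¹ w :=
  bcode_eq_of_firstHit (.here (inv_apply_le_of_forall_lt_apply_eq h))

theorem bcode_mul_swap (σ : Perm (Fin n)) {i w : Fin n} (hi : i < w) :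
    Bcode (σ * swap (σ⁻¹ w) w) i = Bcode σ i := by
  apply bcode_eq_of_firstHit
  rw [mul_inv_rev, swap_inv, swap_mul_apply_of_ne hi.ne]
  exact (firstHit_bcode σ i).swap_mul (not_le.2 hi)

theorem mul_swap_inv_apply_eq_of_le {σ : Perm (Fin n)} {w : Fin n}
    (h : ∀ j, w < j → σ j = j) {j : Fin n} (hj : w ≤ j) :
    (σ * swap (σ⁻¹ w) w) j = j := by
  rcases hj.eq_or_lt with rfl | hj
  · simp
  · have hne : j ≠ σ⁻¹ w := ((inv_apply_le_of_forall_lt_apply_eq h).trans_lt hj).ne'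
    rw [Perm.mul_apply, swap_apply_of_ne_of_ne hne hj.ne', h j hj]

theorem bcode_mul_swap_of_le {σ : Perm (Fin n)} {w : Fin n} (h : ∀ j, w < j → σ j = j)
    {j : Fin n} (hj : w ≤ j) : Bcode (σ * swap (σ⁻¹ w) w) j = j := by
  rw [bcode_eq_inv_apply fun k hk => mul_swap_inv_apply_eq_of_le h (hj.trans hk.le),
    Perm.inv_eq_iff_eq, mul_swap_inv_apply_eq_of_le h hj]

/-- Induction on the largest letter `w` that may move: `σ⁻¹ w = Bcode σ w`, and
`σ * swap (σ⁻¹ w) w` fixes `w` without changing the `B`-code below `w`. -/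
theorem bcode_injective : Function.Injective (Bcode (n := n)) := by
  suffices key : ∀ m : ℕ, ∀ σ τ : Perm (Fin n), (∀ j : Fin n, m ≤ j → σ j = j) →
      (∀ j : Fin n, m ≤ j → τ j = j) → Bcode σ = Bcode τ → σ = τ from
    fun σ τ h => key n σ τ (fun j hj => absurd j.isLt hj.not_gt)
      (fun j hj => absurd j.isLt hj.not_gt) h
  intro m
  induction m with
  | zero =>
    intro σ τ hσ hτ _
    ext j
    rw [hσ j (Nat.zero_le _), hτ j (Nat.zero_le _)]
  | succ m ih =>
    intro σ τ hσ hτ h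
    by_cases hm : m < n
    swap
    · exact ih σ τ (fun j hj => absurd j.isLt (by omega))
        (fun j hj => absurd j.isLt (by omega)) h
    set w : Fin n := ⟨m, hm⟩
    have hσw : ∀ j, w < j → σ j = j := fun j hj => hσ j hj
    have hτw : ∀ j, w < j → τ j = j := fun j hj => hτ j hj
    have ha : τ⁻¹ w = σ⁻¹ w := by
      rw [← bcode_eq_inv_apply hσw, ← bcode_eq_inv_apply hτw, h]
    apply mul_left_injective (swap (σ⁻¹ w) w)
    refine ih _ _ (fun j => mul_swap_inv_apply_eq_of_le hσw)
      (ha ▸ fun j => mul_swap_inv_apply_eq_of_le hτw) (funext fun i => ?_)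
    rcases lt_or_ge i w with hi | hi
    · rw [bcode_mul_swap σ hi, ← ha, bcode_mul_swap τ hi, h]
    · rw [bcode_mul_swap_of_le hσw hi, ← ha, bcode_mul_swap_of_le hτw hi]

def fixedSet (f : Fin n → Fin n) : Finset (Fin n) := {i | f i = i}

def zeroSet (f : Fin n → Fin n) : Finset (Fin n) := {i | (f i : ℕ) = 0}

theorem mem_cycSet_iff (σ : Perm (Fin n)) (i : Fin n) : i ∈ CycSet σ ↔ Bcode σ i = i := by
  set K := Nat.find (bcode_exists σ i)
  have hpos : 0 < K := (Nat.find_spec (bcode_exists σ i)).1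
  have hmin : ∀ j, 0 < j → j < K → i < (σ⁻¹ ^ j) i :=
    fun j hj hjK => lt_of_not_ge fun hle => Nat.find_min (bcode_exists σ i) hjK ⟨hj, hle⟩
  simp only [CycSet, mem_filter, mem_univ, true_and]
  rw [← Perm.forall_le_inv_pow_apply_iff]
  refine ⟨fun h => le_antisymm (bcode_le σ i) (h _), fun h k => ?_⟩
  have hper : Function.IsPeriodicPt (⇑σ⁻¹) K i := by
    rw [Function.IsPeriodicPt, Function.IsFixedPt, ← Perm.coe_pow]
    exact h
  rw [Perm.coe_pow, ← hper.iterate_mod_apply, ← Perm.coe_pow]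
  rcases Nat.eq_zero_or_pos (k % K) with h0 | h0
  · simp [h0]
  · exact (hmin _ h0 (Nat.mod_lt _ hpos)).le

theorem cycSet_eq_fixedSet_bcode (σ : Perm (Fin n)) : CycSet σ = fixedSet (Bcode σ) := by
  ext i
  simp [mem_cycSet_iff, fixedSet]

theorem lmic1Set_eq_zeroSet_bcode (σ : Perm (Fin n)) : Lmic1Set σ = zeroSet (Bcode σ) := by
  ext i
  simp [Lmic1Set, Oset, BcodeNat, zeroSet]

/-- `Leh σ i - 1`, as an element of `Fin n`. -/
def lehmer (σ : Perm (Fin n)) (i : Fin n) : Fin n :=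
  ⟨#{j ∈ Iio i | σ j < σ i}, (card_filter_le _ _).trans_lt (by simp [Fin.card_Iio])⟩

theorem lehmer_le (σ : Perm (Fin n)) (i : Fin n) : lehmer σ i ≤ i :=
  Fin.le_def.2 ((card_filter_le _ _).trans (Fin.card_Iio i).le)

theorem lehmer_val_eq (σ : Perm (Fin n)) (i : Fin n) :
    (lehmer σ i : ℕ) = #{x | σ⁻¹ x ≤ i ∧ x < σ i} := by
  refine card_nbij' σ (⇑σ⁻¹) (fun j hj => ?_) (fun x hx => ?_) (fun _ _ => by simp)
    (fun _ _ => by simp)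
  · simp only [coe_filter, mem_Iio, Set.mem_ofPred_eq, mem_univ, true_and] at hj ⊢
    simpa using ⟨hj.1.le, hj.2⟩
  · simp only [coe_filter, mem_Iio, Set.mem_ofPred_eq, mem_univ, true_and] at hx ⊢
    refine ⟨hx.1.lt_of_ne fun h => ?_, by simpa using hx.2⟩
    simp [← h] at hx

theorem lehmer_lt_lehmer {σ τ : Perm (Fin n)} {i : Fin n} (hστ : ∀ j, i < j → σ j = τ j)
    (hlt : σ i < τ i) : lehmer σ i < lehmer τ i := by
  have hle : ∀ x, σ⁻¹ x ≤ i → τ⁻¹ x ≤ i := fun x hx => by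
    by_contra! h
    have hx' : σ (τ⁻¹ x) = x := by simpa using hστ _ h
    rw [← hx', Perm.coe_inv, symm_apply_apply] at hx
    exact hx.not_gt h
  rw [Fin.lt_def, lehmer_val_eq, lehmer_val_eq]
  refine card_lt_card ((ssubset_iff_of_subset fun x hx => ?_).2 ⟨σ i, ?_, ?_⟩)
  · simp only [mem_filter, mem_univ, true_and] at hx ⊢
    exact ⟨hle x hx.1, hx.2.trans hlt⟩
  · exact mem_filter.2 ⟨mem_univ _, hle (σ i) (by simp), hlt⟩
  · simp

theorem lehmer_injective : Function.Injective (lehmer (n := n)) := by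
  refine fun σ τ h => Equiv.ext fun i => ?_
  induction i using WellFoundedGT.induction with
  | _ i ih =>
    by_contra hne
    rcases lt_or_gt_of_ne hne with hlt | hgt
    · exact (lehmer_lt_lehmer ih hlt).ne (congrFun h i)
    · exact (lehmer_lt_lehmer (fun j hj => (ih j hj).symm) hgt).ne (congrFun h i).symm

theorem lmapSet_eq_fixedSet_lehmer (σ : Perm (Fin n)) : LmapSet σ = fixedSet (lehmer σ) := by
  ext i
  simp only [LmapSet, fixedSet, lehmer, mem_filter, mem_univ, true_and, Fin.ext_iff]
  conv_rhs => rw [← Fin.card_Iio i]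
  rw [card_filter_eq_iff]
  simp

theorem lmipSet_eq_zeroSet_lehmer (σ : Perm (Fin n)) : LmipSet σ = zeroSet (lehmer σ) := by
  ext i
  simp only [LmipSet, zeroSet, lehmer, mem_filter, mem_univ, true_and, card_eq_zero,
    filter_eq_empty_iff, mem_Iio, not_lt]
  refine forall_congr' fun j => forall_congr' fun hj => ?_
  have := σ.injective.ne hj.ne
  grind

theorem rmilSet_eq_lmapSet_inv (σ : Perm (Fin n)) : RmilSet σ = LmapSet σ⁻¹ := by
  ext x
  obtain ⟨i, rfl⟩ := σ.surjective x
  simp only [RmilSet, LmapSet, mem_image, mem_filter, mem_univ, true_and, σ.injective.eq_iff,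
    exists_eq_right, Perm.coe_inv, symm_apply_apply]
  refine Iff.trans ?_ σ.forall_congr_right
  refine forall_congr' fun j => ?_
  have := σ.injective.eq_iff (a := i) (b := j)
  simp only [symm_apply_apply]
  grind

theorem lmilSet_eq_lmipSet_inv (σ : Perm (Fin n)) : LmilSet σ = LmipSet σ⁻¹ := by
  ext x
  obtain ⟨i, rfl⟩ := σ.surjective x
  simp only [LmilSet, LmipSet, mem_image, mem_filter, mem_univ, true_and, σ.injective.eq_iff,
    exists_eq_right, Perm.coe_inv, symm_apply_apply]
  refine Iff.trans ?_ σ.forall_congr_right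
  refine forall_congr' fun j => ?_
  have := σ.injective.eq_iff (a := i) (b := j)
  simp only [symm_apply_apply]
  grind

/-- Codes in `Lₙ`, written with `0`-indexed values: `f i ∈ {0, …, i}`. -/
abbrev Code (n : ℕ) : Type := {f : Fin n → Fin n // ∀ i, f i ≤ i}

theorem card_code : Fintype.card (Code n) = n.factorial := by
  rw [Fintype.card_congr (subtypePiEquivPi (p := fun i (b : Fin n) => b ≤ i)), Fintype.card_pi]
  simp only [Fintype.card_subtype, filter_ge_eq_Iic, Fin.card_Iic]
  rw [Fin.prod_univ_eq_prod_range (· + 1), prod_range_add_one_eq_factorial]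

/-- An injective coding of permutations by codes is a bijection onto `Lₙ`, since both have `n!`
elements. -/
theorem card_fixedSet_zeroSet_of_injective (e : Perm (Fin n) → Fin n → Fin n)
    (he : Function.Injective e) (hle : ∀ σ i, e σ i ≤ i) (S T : Finset (Fin n)) :
    Nat.card {σ : Perm (Fin n) // fixedSet (e σ) = S ∧ zeroSet (e σ) = T} =
      Nat.card {f : Code n // fixedSet f.1 = S ∧ zeroSet f.1 = T} := by
  have hbij : Function.Bijective fun σ => (⟨e σ, hle σ⟩ : Code n) :=
    (Fintype.bijective_iff_injective_and_card _).2
      ⟨fun σ τ h => he (congrArg Subtype.val h), by simp [card_code, Fintype.card_perm]⟩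
  exact Nat.card_congr ((Equiv.ofBijective _ hbij).subtypeEquiv fun _ => Iff.rfl)

def Code.swapEnds (f : Code n) : Code n :=
  ⟨fun i => swap ⟨0, i.pos⟩ i (f.1 i), fun i => by
    change swap _ i (f.1 i) ≤ i
    rw [swap_apply_def]
    split_ifs
    exacts [le_rfl, Fin.le_def.2 (Nat.zero_le _), f.2 i]⟩

theorem Code.swapEnds_involutive : Function.Involutive (Code.swapEnds (n := n)) :=
  fun _ => Subtype.ext (funext fun _ => swap_apply_self _ _ _)

theorem Code.fixedSet_swapEnds (f : Code n) : fixedSet (f.swapEnds.1) = zeroSet f.1 := by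
  ext i
  simp [fixedSet, zeroSet, Code.swapEnds, swap_apply_eq_iff, Fin.ext_iff]

theorem Code.zeroSet_swapEnds (f : Code n) : zeroSet (f.swapEnds.1) = fixedSet f.1 := by
  rw [← Code.fixedSet_swapEnds f.swapEnds, Code.swapEnds_involutive]

theorem card_code_fixedSet_zeroSet_comm (S T : Finset (Fin n)) :
    Nat.card {f : Code n // fixedSet f.1 = S ∧ zeroSet f.1 = T} =
      Nat.card {f : Code n // fixedSet f.1 = T ∧ zeroSet f.1 = S} :=
  Nat.card_congr <| (Code.swapEnds_involutive.toPerm _).subtypeEquiv fun f => by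
    simp [Code.fixedSet_swapEnds, Code.zeroSet_swapEnds, and_comm]

end SortIdx

/-- The pairs of set-valued statistics `(Rmil, Lmil)`,
`(Lmap, Lmip)`, `(Cyc, Lmic₁)` have the same joint distribution on `Sₙ` and
each pair is symmetric. -/
theorem pairs_symmetric_equidistributed (n : ℕ) (S T : Finset (Fin n)) :
    (Nat.card {σ : Equiv.Perm (Fin n) // SortIdx.RmilSet σ = S ∧ SortIdx.LmilSet σ = T} =
      Nat.card {σ : Equiv.Perm (Fin n) // SortIdx.LmapSet σ = S ∧ SortIdx.LmipSet σ = T}) ∧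
    (Nat.card {σ : Equiv.Perm (Fin n) // SortIdx.LmapSet σ = S ∧ SortIdx.LmipSet σ = T} =
      Nat.card {σ : Equiv.Perm (Fin n) // SortIdx.CycSet σ = S ∧ SortIdx.Lmic1Set σ = T}) ∧
    (Nat.card {σ : Equiv.Perm (Fin n) // SortIdx.RmilSet σ = S ∧ SortIdx.LmilSet σ = T} =
      Nat.card {σ : Equiv.Perm (Fin n) // SortIdx.RmilSet σ = T ∧ SortIdx.LmilSet σ = S}) ∧
    (Nat.card {σ : Equiv.Perm (Fin n) // SortIdx.LmapSet σ = S ∧ SortIdx.LmipSet σ = T} =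
      Nat.card {σ : Equiv.Perm (Fin n) // SortIdx.LmapSet σ = T ∧ SortIdx.LmipSet σ = S}) ∧
    (Nat.card {σ : Equiv.Perm (Fin n) // SortIdx.CycSet σ = S ∧ SortIdx.Lmic1Set σ = T} =
      Nat.card {σ : Equiv.Perm (Fin n) // SortIdx.CycSet σ = T ∧ SortIdx.Lmic1Set σ = S}) := by
  open SortIdx in
  have hR : ∀ S T, Nat.card {σ : Perm (Fin n) // RmilSet σ = S ∧ LmilSet σ = T} =
      Nat.card {σ : Perm (Fin n) // LmapSet σ = S ∧ LmipSet σ = T} := fun S T =>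
    Nat.card_congr <| (Equiv.inv _).subtypeEquiv fun σ => by
      simp [rmilSet_eq_lmapSet_inv, lmilSet_eq_lmipSet_inv]
  have hL : ∀ S T, Nat.card {σ : Perm (Fin n) // LmapSet σ = S ∧ LmipSet σ = T} =
      Nat.card {f : Code n // fixedSet f.1 = S ∧ zeroSet f.1 = T} := fun S T => by
    simp only [lmapSet_eq_fixedSet_lehmer, lmipSet_eq_zeroSet_lehmer]
    exact card_fixedSet_zeroSet_of_injective _ lehmer_injective lehmer_le S T
  have hC : ∀ S T, Nat.card {σ : Perm (Fin n) // CycSet σ = S ∧ Lmic1Set σ = T} =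
      Nat.card {f : Code n // fixedSet f.1 = S ∧ zeroSet f.1 = T} := fun S T => by
    simp only [cycSet_eq_fixedSet_bcode, lmic1Set_eq_zeroSet_bcode]
    exact card_fixedSet_zeroSet_of_injective _ bcode_injective bcode_le S T
  have hsymm := card_code_fixedSet_zeroSet_comm S T
  exact ⟨hR S T, by rw [hL, hC], by rw [hR, hR, hL, hL, hsymm], by rw [hL, hL, hsymm],
    by rw [hC, hC, hsymm]⟩
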